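/- Let h : (0,∞) → (0,∞) be a nondecreasing supermultiplicative function with inf_{δ>0} h(δ) = 0 and h(α) + h(1−α) ≤ 1 for all α ∈ (0,1). Let I be a real interval, let a < b with [a,b] contained in the interior of I, and let f : I → ℝ be a nonnegative h-convex function. Suppose there exists ε > 0 with (a−ε, b+ε) ⊆ I, f bounded on (a−ε, b+ε), and h(ε) equal to the oscillation sup_{(a−ε,b+ε)} f − inf_{(a−ε,b+ε)} f of f on (a−ε, b+ε). Then f is h-continuous on [a,b], i.e., |f(x) − f(y)| ≤ h(|x − y|) for all distinct x, y ∈ [a,b]. -/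
import Mathlib


/-- An `h`-convex nonnegative function is `h`-continuous on `[a,b]`,
where `h` is a nondecreasing supermultiplicative control function with
`h α + h (1-α) ≤ 1` on `(0,1)`, under the stated boundedness/oscillation hypotheses. -/
theorem hconvex_implies_hcontinuous'
    (h : ℝ → ℝ) (h_pos : ∀ t ∈ Set.Ioi (0 : ℝ), 0 < h t)
    (h_mono : MonotoneOn h (Set.Ioi (0 : ℝ)))
    (h_supermul : ∀ x ∈ Set.Ioi (0 : ℝ), ∀ y ∈ Set.Ioi (0 : ℝ), h x * h y ≤ h (x * y))
    (h_inf : sInf (h '' Set.Ioi (0 : ℝ)) = 0)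
    (h_sum : ∀ α ∈ Set.Ioo (0 : ℝ) 1, h α + h (1 - α) ≤ 1)
    (I : Set ℝ) (hI : I.OrdConnected)
    (a b : ℝ) (hab : a < b) (hab_int : Set.Icc a b ⊆ interior I)
    (f : ℝ → ℝ) (f_nonneg : ∀ x ∈ I, 0 ≤ f x)
    (f_hconvex : ∀ x ∈ I, ∀ y ∈ I, ∀ t ∈ Set.Ioo (0 : ℝ) 1,
        f (t * x + (1 - t) * y) ≤ h t * f x + h (1 - t) * f y)
    (ε : ℝ) (hε : 0 < ε) (hεI : Set.Ioo (a - ε) (b + ε) ⊆ I)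
    (f_bdd_above : BddAbove (f '' Set.Ioo (a - ε) (b + ε)))
    (f_bdd_below : BddBelow (f '' Set.Ioo (a - ε) (b + ε)))
    (h_osc : h ε = sSup (f '' Set.Ioo (a - ε) (b + ε)) - sInf (f '' Set.Ioo (a - ε) (b + ε))) :
    ∀ x ∈ Set.Icc a b, ∀ y ∈ Set.Icc a b, x ≠ y → |f x - f y| ≤ h |x - y| := by
  set M := sSup (f '' Set.Ioo (a - ε) (b + ε)) with hM
  set m := sInf (f '' Set.Ioo (a - ε) (b + ε)) with hm
  have hsub : Set.Icc a b ⊆ Set.Ioo (a - ε) (b + ε) := fun z hz =>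
    ⟨by linarith [hz.1], by linarith [hz.2]⟩
  have hub : ∀ z ∈ Set.Ioo (a - ε) (b + ε), f z ≤ M := fun z hz =>
    le_csSup f_bdd_above ⟨z, hz, rfl⟩
  have hlb : ∀ z ∈ Set.Ioo (a - ε) (b + ε), m ≤ f z := fun z hz =>
    csInf_le f_bdd_below ⟨z, hz, rfl⟩
  have key : ∀ x ∈ Set.Icc a b, ∀ y ∈ Set.Icc a b, x ≠ y → f y - f x ≤ h |x - y| := by
    intro x hx y hy hxy
    have hxO := hsub hx
    have hyO := hsub hy
    have hd : (0:ℝ) < |x - y| := abs_pos.mpr (sub_ne_zero.mpr hxy)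
    rcases le_or_gt ε |x - y| with hεd | hdε
    · have h1 : h ε ≤ h |x - y| := h_mono hε hd hεd
      have := hub y hyO
      have := hlb x hxO
      linarith
    · -- |x - y| < ε
      set d := |x - y| with hdd
      set t := d / ε with htdef
      have ht : t ∈ Set.Ioo (0:ℝ) 1 := ⟨div_pos hd hε, (div_lt_one hε).mpr hdε⟩
      have htε : t * ε = d := div_mul_cancel₀ d hε.ne'
      rcases hxy.lt_or_gt with hlt | hlt
      · -- x < y, take z = x + ε
        have hdval : d = y - x := by rw [hdd, abs_sub_comm, abs_of_pos (by linarith)]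
        have hzO : x + ε ∈ Set.Ioo (a - ε) (b + ε) := ⟨by linarith [hx.1], by
          have : x < b := lt_of_lt_of_le hlt hy.2
          linarith⟩
        have hc := f_hconvex (x + ε) (hεI hzO) x (hεI hxO) t ht
        have hyeq : t * (x + ε) + (1 - t) * x = y := by
          have h2 : t * ε = y - x := by rw [htε, hdval]
          linear_combination h2
        rw [hyeq] at hc
        have hs := h_sum t ht
        have hfx := f_nonneg x (hεI hxO)
        have hz1 := hub (x + ε) hzO
        have hx1 := hlb x hxO
        have htp := h_pos t (Set.mem_Ioi.mpr ht.1)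
        have hsm := h_supermul t (Set.mem_Ioi.mpr ht.1) ε (Set.mem_Ioi.mpr hε)
        rw [htε] at hsm
        nlinarith [mul_le_mul_of_nonneg_left hz1 htp.le,
          mul_le_mul_of_nonneg_left hx1 htp.le]
      · -- y < x, take z = x - ε
        have hdval : d = x - y := by rw [hdd, abs_of_pos (by linarith)]
        have hzO : x - ε ∈ Set.Ioo (a - ε) (b + ε) := ⟨by
          have : a < x := lt_of_le_of_lt hy.1 hlt
          linarith, by linarith [hx.2]⟩
        have hc := f_hconvex (x - ε) (hεI hzO) x (hεI hxO) t ht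
        have hyeq : t * (x - ε) + (1 - t) * x = y := by
          have h2 : t * ε = x - y := by rw [htε, hdval]
          linear_combination -h2
        rw [hyeq] at hc
        have hs := h_sum t ht
        have hfx := f_nonneg x (hεI hxO)
        have hz1 := hub (x - ε) hzO
        have hx1 := hlb x hxO
        have htp := h_pos t (Set.mem_Ioi.mpr ht.1)
        have hsm := h_supermul t (Set.mem_Ioi.mpr ht.1) ε (Set.mem_Ioi.mpr hε)
        rw [htε] at hsm
        nlinarith [mul_le_mul_of_nonneg_left hz1 htp.le,
          mul_le_mul_of_nonneg_left hx1 htp.le]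
  intro x hx y hy hxy
  rw [abs_sub_le_iff]
  constructor
  · have := key y hy x hx hxy.symm
    rwa [abs_sub_comm] at this
  · exact key x hx y hy hxy
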